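/- arXiv:1309.0949 — 7 statements merged into one kernel-verified Lean document; each statement's English description precedes it below -/
import Mathlib

section
/- For every integer n ≥ 1, the alternating sum ∑_{r=0}^{n} (−1)^r · binom(n−r+1, r) · C_{n−r} equals 0, where C_k denotes the k-th Catalan number (Koshy's formula). -/
/-!
Let `c(x) = ∑ Cat_k x^k`, so that `c = 1 + x c²`. Substituting `x(1 - x)` gives a series
`T = c(x(1 - x))` with `T = 1 + x(1 - x) T²`, and then `Q = (1 - x) T` satisfies
`(Q - 1)(x Q + x - 1) = 0`. The second factor has constant coefficient `-1`, hence is a unit,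
so `(1 - x) T = ∑ Cat_k x^k (1 - x)^(k + 1)` equals `1`. Koshy's sum is its coefficient of `x^n`.
-/

open Finset PowerSeries

namespace PowerSeries

variable {R : Type*} [CommRing R]

theorem coeff_one_sub_X_pow (n m : ℕ) :
    coeff m ((1 - X : R⟦X⟧) ^ n) = (-1) ^ m * n.choose m := by
  have h : (1 - X : R⟦X⟧) = rescale (-1) (1 + X) := by simp [sub_eq_add_neg]
  rw [h, ← map_pow, coeff_rescale, ← Polynomial.coe_X, ← Polynomial.coe_one,
    ← Polynomial.coe_add, ← Polynomial.coe_pow, Polynomial.coeff_coe,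
    Polynomial.coeff_one_add_X_pow]

theorem coeff_subst_eq_sum {b : R⟦X⟧} (hb : constantCoeff b = 0) (f : R⟦X⟧) {e n : ℕ}
    (he : e ≤ n) :
    coeff e (f.subst b) = ∑ d ∈ range (n + 1), coeff d f * coeff e (b ^ d) := by
  rw [coeff_subst' (.of_constantCoeff_zero' hb)]
  refine finsum_eq_sum_of_support_subset _ fun d hd => mem_range.mpr ?_
  by_contra! hnd
  obtain ⟨q, hq⟩ := pow_dvd_pow_of_dvd (X_dvd_iff.mpr hb) d
  rw [Function.mem_support, hq, coeff_X_pow_mul', if_neg (by omega), smul_zero] at hd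
  exact hd rfl

theorem coeff_mul_subst {b : R⟦X⟧} (hb : constantCoeff b = 0) (f g : R⟦X⟧) (n : ℕ) :
    coeff n (g * f.subst b) = ∑ d ∈ range (n + 1), coeff d f * coeff n (g * b ^ d) := by
  simp_rw [coeff_mul n g, mul_sum]
  rw [sum_comm]
  refine sum_congr rfl fun ij hij => ?_
  rw [coeff_subst_eq_sum hb f (HasAntidiagonal.antidiagonal.snd_le hij), mul_sum]
  exact sum_congr rfl fun d _ => by ring

theorem one_sub_X_mul_eq_one_of_sq_mul_X_mul_one_sub_X_add_one {T : R⟦X⟧}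
    (h : T ^ 2 * (X * (1 - X)) + 1 = T) : (1 - X) * T = 1 := by
  set Q := (1 - X) * T
  have hfactor : (Q - 1) * (X * Q + X - 1) = 0 := by
    linear_combination (1 - X) * h
  have hunit : IsUnit (X * Q + X - 1) := by
    simp [isUnit_iff_constantCoeff]
  exact sub_eq_zero.mp (hunit.mul_left_eq_zero.mp hfactor)

theorem one_sub_X_mul_catalanSeries_subst_X_mul_one_sub_X :
    (1 - X) * (catalanSeries.map (Nat.castRingHom R)).subst (X * (1 - X) : R⟦X⟧) = 1 := by
  have hy : HasSubst (X * (1 - X) : R⟦X⟧) := HasSubst.X'.mul_left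
  apply one_sub_X_mul_eq_one_of_sq_mul_X_mul_one_sub_X_add_one
  have := congrArg (fun f => substAlgHom hy (f.map (Nat.castRingHom R)))
    catalanSeries_sq_mul_X_add_one
  simpa only [map_add, map_mul, map_pow, map_one, map_X, substAlgHom_X, coe_substAlgHom]
    using this

theorem coeff_one_sub_X_mul_X_mul_one_sub_X_pow {d n : ℕ} (h : d ≤ n) :
    coeff n ((1 - X : R⟦X⟧) * (X * (1 - X)) ^ d) =
      (-1 : R) ^ (n - d) * (d + 1).choose (n - d) := by
  rw [mul_pow, show (1 - X : R⟦X⟧) * (X ^ d * (1 - X) ^ d) = X ^ d * (1 - X) ^ (d + 1) by ring,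
    coeff_X_pow_mul', if_pos h, coeff_one_sub_X_pow]

theorem coeff_one_sub_X_mul_catalanSeries_subst_X_mul_one_sub_X (n : ℕ) :
    coeff n ((1 - X) * (catalanSeries.map (Nat.castRingHom R)).subst (X * (1 - X) : R⟦X⟧)) =
      ∑ r ∈ range (n + 1), (-1) ^ r * ((n - r + 1).choose r : R) * (catalan (n - r) : R) := by
  rw [coeff_mul_subst (by simp), ← sum_range_reflect]
  refine sum_congr rfl fun r hr => ?_
  have hrn : r ≤ n := Nat.lt_succ_iff.mp (mem_range.mp hr)
  rw [coeff_map, catalanSeries_coeff, coeff_one_sub_X_mul_X_mul_one_sub_X_pow (by omega),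
    show n + 1 - 1 - r = n - r by omega, Nat.sub_sub_self hrn]
  simp only [eq_natCast]
  ring

end PowerSeries

/-- **Koshy's formula.** For every integer `n ≥ 1`,
`∑_{r=0}^{n} (−1)^r · binom(n−r+1, r) · C_{n−r} = 0`,
where `C_k = (1/(k+1))·binom(2k,k)` is the `k`-th Catalan number
(Mathlib's `catalan`). -/
theorem koshy_formula (n : ℕ) (hn : 1 ≤ n) :
    ∑ r ∈ Finset.range (n + 1),
      (-1 : ℤ) ^ r * ((n - r + 1).choose r : ℤ) * (catalan (n - r) : ℤ) = 0 := by
  rw [← coeff_one_sub_X_mul_catalanSeries_subst_X_mul_one_sub_X,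
    one_sub_X_mul_catalanSeries_subst_X_mul_one_sub_X, coeff_one, if_neg (by omega)]
end

section
/- For all integers n ≥ 1 and j ≥ 0, ∑_{m ≥ j} binom(m, j) · g_{n,m} = binom(n−j+1, j) · C_{n−j}, where g_{n,m} is the number of elevated Dyck paths of length 2n+2 having exactly m up-peaks. -/
/-- A Dyck path, encoded as a list of booleans where `true` is a `U`-step
and `false` is a `D`-step: equal numbers of `U`'s and `D`'s, and every
prefix has at least as many `U`'s as `D`'s. -/
def IsDyckPath (w : List Bool) : Prop :=
  w.count true = w.count false ∧ ∀ p : List Bool, p <+: w → p.count false ≤ p.count true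

/-- An elevated Dyck path of length `2n+2` is `U p D` where `p` is a Dyck
path of length `2n`. -/
def IsElevatedDyckPath (n : ℕ) (w : List Bool) : Prop :=
  ∃ p : List Bool, IsDyckPath p ∧ p.length = 2 * n ∧ w = true :: (p ++ [false])

/-- The number of up-peaks of a path, i.e. occurrences of `UUD` as a
consecutive factor. -/
def upPeaks (w : List Bool) : ℕ :=
  (List.range w.length).countP fun i => [true, true, false] <+: w.drop i

/-- `g n m` is the number of elevated Dyck paths of length `2n+2` having
exactly `m` up-peaks. -/
noncomputable def g (n m : ℕ) : ℕ :=
  Nat.card {w : List Bool // IsElevatedDyckPath n w ∧ upPeaks w = m}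

/-!
Marking `j` of the up-peaks of an elevated path and contracting each marked `UUD` to a single
marked `U` is a bijection onto elevated paths of semilength `n - j + 1` with `j` marked up-steps.
Indeed, contraction preserves the final height, and since a contracted `UUD` only rises above its
starting level, it also preserves the lower bounds on the heights of proper prefixes which
characterize elevated paths. So both sides count the same marked paths: an elevated path with
`m` up-peaks has `binom(m, j)` markings, and one of semilength `n - j + 1` has `n - j + 1`
up-steps, hence `binom(n - j + 1, j)` markings.
-/

namespace DyckPath

open Finset Polynomial

def height (w : List Bool) : ℤ := w.count true - w.count false

@[simp] lemma height_nil : height [] = 0 := by simp [height]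

@[simp] lemma height_cons (b : Bool) (w : List Bool) :
    height (b :: w) = (if b then 1 else -1) + height w := by
  cases b <;>
    simp only [height, ne_eq, Bool.false_eq_true, Bool.true_eq_false, not_false_eq_true,
      List.count_cons_of_ne, List.count_cons_self, Nat.cast_add, Nat.cast_one, ↓reduceIte,
      Int.reduceNeg] <;>
    ring

@[simp] lemma height_append (v w : List Bool) : height (v ++ w) = height v + height w := by
  simp only [height, List.count_append, Nat.cast_add]
  ring

lemma isDyckPath_iff (p : List Bool) :
    IsDyckPath p ↔ height p = 0 ∧ ∀ r, r <+: p → 0 ≤ height r := by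
  simp only [IsDyckPath, height, sub_eq_zero, sub_nonneg, Nat.cast_inj, Nat.cast_le]

def ProperPrefixesAbove (d : ℤ) (w : List Bool) : Prop :=
  ∀ r, r <+: w → r ≠ w → d ≤ height r

lemma properPrefixesAbove_cons (d : ℤ) (b : Bool) (w : List Bool) :
    ProperPrefixesAbove d (b :: w) ↔
      d ≤ 0 ∧ ProperPrefixesAbove (d - if b then 1 else -1) w := by
  simp only [ProperPrefixesAbove, List.prefix_cons_iff]
  constructor
  · intro h
    refine ⟨by simpa using h [] (Or.inl rfl) (by simp), fun r hr hne => ?_⟩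
    have := h (b :: r) (Or.inr ⟨r, rfl, hr⟩) (by simpa using hne)
    simp only [height_cons] at this
    linarith
  · rintro ⟨h0, h⟩ r (rfl | ⟨t, rfl, ht⟩) hne
    · simpa using h0
    · have := h t ht (by simpa using hne)
      simp only [height_cons]
      linarith

lemma exists_isDyckPath_append_false_iff (v : List Bool) :
    (∃ p, IsDyckPath p ∧ v = p ++ [false]) ↔ height v = -1 ∧ ProperPrefixesAbove 0 v := by
  constructor
  · rintro ⟨p, hp, rfl⟩
    rw [isDyckPath_iff] at hp
    refine ⟨by simp [hp.1], fun r hr hne => hp.2 r ?_⟩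
    exact (List.prefix_concat_iff.mp hr).resolve_left hne
  · rintro ⟨hv, hpre⟩
    rcases v.eq_nil_or_concat with rfl | ⟨p, c, rfl⟩
    · simp at hv
    rw [List.concat_eq_append] at hv hpre ⊢
    have hp : ∀ r, r <+: p → 0 ≤ height r := fun r hr =>
      hpre r (hr.trans (List.prefix_append _ _)) fun h => by simpa [h] using hr.length_le
    have := hp p (List.prefix_refl p)
    cases c
    · exact ⟨p, (isDyckPath_iff p).2 ⟨by simpa using hv, hp⟩, rfl⟩
    · simp only [height_append, height_cons, height_nil, ↓reduceIte] at hv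
      linarith

lemma isElevatedDyckPath_iff (n : ℕ) (w : List Bool) :
    IsElevatedDyckPath n w ↔
      w.length = 2 * n + 2 ∧
        ∃ v, w = true :: v ∧ height v = -1 ∧ ProperPrefixesAbove 0 v := by
  simp_rw [← exists_isDyckPath_append_false_iff]
  constructor
  · rintro ⟨p, hp, hl, rfl⟩
    exact ⟨by simp [hl], _, rfl, p, hp, rfl⟩
  · rintro ⟨hl, _, rfl, p, hp, rfl⟩
    simp only [List.length_cons, List.length_append, List.length_nil] at hl
    exact ⟨p, hp, by omega, rfl⟩

lemma _root_.IsElevatedDyckPath.length_eq {n : ℕ} {w : List Bool}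
    (h : IsElevatedDyckPath n w) : w.length = 2 * n + 2 :=
  ((isElevatedDyckPath_iff n w).1 h).1

lemma _root_.IsElevatedDyckPath.count_true {n : ℕ} {w : List Bool}
    (h : IsElevatedDyckPath n w) : w.count true = n + 1 := by
  obtain ⟨p, ⟨hc, -⟩, hl, rfl⟩ := h
  have := p.count_true_add_count_false
  have : (true :: (p ++ [false])).count true = p.count true + 1 := by simp
  omega

/- In a marked path `x : List (Option Bool)`, `none` is a marked up-step: `expandMarks` turns it
into the up-peak `UUD` and `forgetMarks` into a plain `U`. -/
def expandMarks (x : List (Option Bool)) : List Bool :=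
  x.flatMap fun | none => [true, true, false] | some b => [b]

def forgetMarks (x : List (Option Bool)) : List Bool := x.map (·.getD true)

@[simp] lemma expandMarks_nil : expandMarks [] = [] := rfl

@[simp] lemma expandMarks_cons_none (x : List (Option Bool)) :
    expandMarks (none :: x) = true :: true :: false :: expandMarks x := rfl

@[simp] lemma expandMarks_cons_some (b : Bool) (x : List (Option Bool)) :
    expandMarks (some b :: x) = b :: expandMarks x := rfl

@[simp] lemma forgetMarks_nil : forgetMarks [] = [] := rfl

@[simp] lemma forgetMarks_cons (a : Option Bool) (x : List (Option Bool)) :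
    forgetMarks (a :: x) = a.getD true :: forgetMarks x := rfl

lemma length_expandMarks (x : List (Option Bool)) :
    (expandMarks x).length = x.length + 2 * x.count none := by
  induction x with
  | nil => rfl
  | cons a x ih => rcases a with _ | b <;> simp [ih] <;> omega

lemma length_forgetMarks (x : List (Option Bool)) : (forgetMarks x).length = x.length :=
  List.length_map _

lemma height_expandMarks (x : List (Option Bool)) :
    height (expandMarks x) = height (forgetMarks x) := by
  induction x with
  | nil => rfl
  | cons a x ih => rcases a with _ | b <;> simp [ih]

lemma properPrefixesAbove_expandMarks_iff (d : ℤ) (x : List (Option Bool)) :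
    ProperPrefixesAbove d (expandMarks x) ↔ ProperPrefixesAbove d (forgetMarks x) := by
  induction x generalizing d with
  | nil => rfl
  | cons a x ih =>
    rcases a with _ | b
    · simp only [expandMarks_cons_none, forgetMarks_cons, Option.getD_none,
        properPrefixesAbove_cons, Bool.false_eq_true, ↓reduceIte, ih]
      rw [show d - 1 - 1 - -1 = d - 1 by ring]
      constructor
      · rintro ⟨h, -, -, h'⟩
        exact ⟨h, h'⟩
      · rintro ⟨h, h'⟩
        exact ⟨h, by linarith, by linarith, h'⟩
    · simp only [expandMarks_cons_some, forgetMarks_cons, Option.getD_some,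
        properPrefixesAbove_cons, ih]

lemma isElevatedDyckPath_expandMarks_iff (k : ℕ) (x : List (Option Bool)) :
    IsElevatedDyckPath (k + x.count none) (expandMarks x) ↔
      IsElevatedDyckPath k (forgetMarks x) := by
  rw [isElevatedDyckPath_iff, isElevatedDyckPath_iff, length_expandMarks, length_forgetMarks]
  refine and_congr (by omega) ?_
  rcases x with _ | ⟨_ | b, x⟩
  · simp
  · simp [properPrefixesAbove_cons, height_expandMarks, properPrefixesAbove_expandMarks_iff]
  · simp [height_expandMarks, properPrefixesAbove_expandMarks_iff]

lemma count_none_le_of_isElevatedDyckPath_expandMarks {n : ℕ} {x : List (Option Bool)}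
    (h : IsElevatedDyckPath n (expandMarks x)) : x.count none ≤ n := by
  have hl := h.length_eq
  rw [length_expandMarks] at hl
  have : x ≠ [] := by rintro rfl; simp at hl
  have := List.length_pos_iff.2 this
  omega

lemma upPeaks_cons (b : Bool) (w : List Bool) :
    upPeaks (b :: w) = upPeaks w + if [true, true, false] <+: b :: w then 1 else 0 := by
  simp [upPeaks, List.range_succ_eq_map, List.countP_cons, List.countP_map, Function.comp_def]

lemma upPeaks_le_length (w : List Bool) : upPeaks w ≤ w.length :=
  List.countP_le_length.trans (List.length_range ..).le

def peakMarkings : List Bool → Finset (List (Option Bool))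
  | [] => {[]}
  | true :: true :: false :: w =>
      (peakMarkings w).image (none :: ·) ∪
        (peakMarkings (true :: false :: w)).image (some true :: ·)
  | b :: w => (peakMarkings w).image (some b :: ·)

def upMarkings : List Bool → Finset (List (Option Bool))
  | [] => {[]}
  | true :: q => (upMarkings q).image (none :: ·) ∪ (upMarkings q).image (some true :: ·)
  | false :: q => (upMarkings q).image (some false :: ·)

lemma mem_peakMarkings {x : List (Option Bool)} {w : List Bool} :
    x ∈ peakMarkings w ↔ expandMarks x = w := by
  induction w using peakMarkings.induct generalizing x with
  | case1 => rcases x with _ | ⟨_ | _ | _, x⟩ <;> simp [peakMarkings]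
  | case2 w ih ih' =>
    rw [peakMarkings]
    rcases x with _ | ⟨_ | _ | _, x⟩ <;> simp [ih, ih']
  | case3 b w hw ih =>
    rw [peakMarkings.eq_3 b w hw]
    rcases x with _ | ⟨_ | _ | _, x⟩ <;> simp [ih, and_comm]
    exact fun hb hx => hw _ hb hx.symm

lemma mem_upMarkings {x : List (Option Bool)} {q : List Bool} :
    x ∈ upMarkings q ↔ forgetMarks x = q := by
  induction q generalizing x with
  | nil => cases x <;> simp [upMarkings]
  | cons b q ih => cases b <;> rcases x with _ | ⟨_ | _ | _, x⟩ <;> simp [upMarkings, ih]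

noncomputable def markPoly (s : Finset (List (Option Bool))) : ℕ[X] :=
  ∑ x ∈ s, X ^ x.count none

lemma coeff_markPoly (s : Finset (List (Option Bool))) (j : ℕ) :
    (markPoly s).coeff j = #{x ∈ s | x.count none = j} := by
  simp [markPoly, finsetSum_coeff, coeff_X_pow, eq_comm]

lemma markPoly_union {s t : Finset (List (Option Bool))} (h : Disjoint s t) :
    markPoly (s ∪ t) = markPoly s + markPoly t :=
  sum_union h

lemma markPoly_image_cons (a : Option Bool) (s : Finset (List (Option Bool))) :
    markPoly (s.image (a :: ·)) = (if a = none then X else 1) * markPoly s := by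
  rw [markPoly, sum_image fun _ _ _ _ h => List.cons_injective h, markPoly, mul_sum]
  refine sum_congr rfl fun x _ => ?_
  cases a <;> simp [pow_succ, mul_comm]

lemma disjoint_image_cons {α : Type*} [DecidableEq α] {a b : α} (h : a ≠ b)
    (s t : Finset (List α)) : Disjoint (s.image (a :: ·)) (t.image (b :: ·)) := by
  simp [disjoint_left, h.symm]

lemma markPoly_peakMarkings (w : List Bool) :
    markPoly (peakMarkings w) = (1 + X) ^ upPeaks w := by
  induction w using peakMarkings.induct with
  | case1 => simp [peakMarkings, markPoly, upPeaks]
  | case2 w ih ih' =>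
    rw [peakMarkings, markPoly_union (disjoint_image_cons (by simp) _ _), markPoly_image_cons,
      markPoly_image_cons, ih, ih']
    simp only [↓reduceIte, reduceCtorEq, upPeaks_cons, List.cons_prefix_cons, Bool.true_eq_false,
      false_and, add_zero, and_false, one_mul, List.nil_prefix, and_self]
    ring
  | case3 b w hw ih =>
    have hpeak : ¬[true, true, false] <+: b :: w := by
      rintro ⟨t, ht⟩
      simp only [List.cons_append, List.nil_append, List.cons.injEq] at ht
      exact hw t ht.1.symm ht.2.symm
    rw [peakMarkings.eq_3 b w hw, markPoly_image_cons, ih, upPeaks_cons, if_neg hpeak]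
    simp

lemma markPoly_upMarkings (q : List Bool) :
    markPoly (upMarkings q) = (1 + X) ^ q.count true := by
  induction q with
  | nil => simp [upMarkings, markPoly]
  | cons b q ih =>
    cases b
    · simp [upMarkings, markPoly_image_cons, ih]
    · rw [upMarkings, markPoly_union (disjoint_image_cons (by simp) _ _), markPoly_image_cons,
        markPoly_image_cons, ih]
      simp only [↓reduceIte, reduceCtorEq, one_mul, List.count_cons_self, pow_succ]
      ring

lemma card_filter_peakMarkings (w : List Bool) (j : ℕ) :
    #{x ∈ peakMarkings w | x.count none = j} = (upPeaks w).choose j := by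
  rw [← coeff_markPoly, markPoly_peakMarkings, coeff_one_add_X_pow, Nat.cast_id]

lemma card_filter_upMarkings (q : List Bool) (j : ℕ) :
    #{x ∈ upMarkings q | x.count none = j} = (q.count true).choose j := by
  rw [← coeff_markPoly, markPoly_upMarkings, coeff_one_add_X_pow, Nat.cast_id]

lemma sum_card_filter_eq_card_filter_biUnion {α β : Type*} [DecidableEq α] {f : α → β}
    {F : β → Finset α} (hF : ∀ x b, x ∈ F b ↔ f x = b) (s : Finset β) (p : α → Prop)
    [DecidablePred p] :
    ∑ b ∈ s, #{x ∈ F b | p x} = #{x ∈ s.biUnion F | p x} := by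
  rw [filter_biUnion, card_biUnion]
  intro b _ b' _ hne
  simp only [Function.onFun, disjoint_left, mem_filter, hF]
  rintro x ⟨rfl, -⟩ ⟨h, -⟩
  exact hne h

lemma finite_setOf_isElevatedDyckPath (n : ℕ) : {w | IsElevatedDyckPath n w}.Finite :=
  (List.finite_length_eq Bool (2 * n + 2)).subset fun _ h => IsElevatedDyckPath.length_eq h

noncomputable def elevatedPaths (n : ℕ) : Finset (List Bool) :=
  (finite_setOf_isElevatedDyckPath n).toFinset

@[simp] lemma mem_elevatedPaths {n : ℕ} {w : List Bool} :
    w ∈ elevatedPaths n ↔ IsElevatedDyckPath n w :=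
  Set.Finite.mem_toFinset _

def dyckStepEquivBool : DyckStep ≃ Bool where
  toFun | .U => true | .D => false
  invFun b := if b then .U else .D
  left_inv s := by cases s <;> rfl
  right_inv b := by cases b <;> rfl

lemma setOf_isDyckPath_eq_image (n : ℕ) :
    {p | IsDyckPath p ∧ p.length = 2 * n} =
      (fun d : DyckWord => d.toList.map dyckStepEquivBool) '' {d | d.semilength = n} := by
  have hcount (l : List DyckStep) (s : DyckStep) :
      (l.map dyckStepEquivBool).count (dyckStepEquivBool s) = l.count s :=
    List.count_map_of_injective _ _ dyckStepEquivBool.injective s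
  have hcount' (p : List Bool) (b : Bool) :
      (p.map dyckStepEquivBool.symm).count (dyckStepEquivBool.symm b) = p.count b :=
    List.count_map_of_injective _ _ dyckStepEquivBool.symm.injective b
  ext p
  constructor
  · rintro ⟨⟨hc, hpre⟩, hl⟩
    refine ⟨⟨p.map dyckStepEquivBool.symm, ?_, fun i => ?_⟩, ?_, ?_⟩
    · exact (hcount' p true).trans (hc.trans (hcount' p false).symm)
    · rw [← List.map_take]
      exact (hcount' _ false).trans_le
        ((hpre _ (List.take_prefix i p)).trans (hcount' _ true).ge)
    · have := p.count_true_add_count_false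
      change (p.map dyckStepEquivBool.symm).count (dyckStepEquivBool.symm true) = n
      rw [hcount']
      omega
    · simp only [List.map_map, Equiv.self_comp_symm, List.map_id]
  · rintro ⟨d, rfl, rfl⟩
    refine ⟨⟨(hcount _ .U).trans (d.count_U_eq_count_D.trans (hcount _ .D).symm),
      fun r hr => ?_⟩, by rw [List.length_map, ← d.two_mul_semilength_eq_length]⟩
    rw [List.prefix_iff_eq_take.mp hr, ← List.map_take]
    exact (hcount _ .D).trans_le ((d.count_D_le_count_U _).trans (hcount _ .U).ge)

lemma setOf_isElevatedDyckPath_eq_image (n : ℕ) :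
    {w | IsElevatedDyckPath n w} =
      (fun p => true :: (p ++ [false])) '' {p | IsDyckPath p ∧ p.length = 2 * n} := by
  ext w
  simp [IsElevatedDyckPath, and_assoc, eq_comm]

lemma card_elevatedPaths (n : ℕ) : #(elevatedPaths n) = catalan n := by
  rw [elevatedPaths, ← Nat.card_eq_card_finite_toFinset, setOf_isElevatedDyckPath_eq_image,
    Nat.card_image_of_injective (by simp [Function.Injective]), setOf_isDyckPath_eq_image,
    Nat.card_image_of_injective, Set.coe_ofPred, Nat.card_eq_fintype_card,
    DyckWord.card_dyckWord_semilength_eq_catalan]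
  intro d d' h
  exact DyckWord.ext (List.map_injective_iff.2 dyckStepEquivBool.injective h)

lemma g_eq_card (n m : ℕ) : g n m = #{w ∈ elevatedPaths n | upPeaks w = m} := by
  rw [g, ← Nat.card_eq_finsetCard]
  exact Nat.card_congr (Equiv.subtypeEquivRight fun w => by simp)

lemma sum_choose_mul_g (n j : ℕ) :
    ∑ m ∈ Icc j (2 * n + 2), m.choose j * g n m =
      ∑ w ∈ elevatedPaths n, (upPeaks w).choose j := by
  calc ∑ m ∈ Icc j (2 * n + 2), m.choose j * g n m
      = ∑ m ∈ Icc j (2 * n + 2),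
          ∑ w ∈ elevatedPaths n with upPeaks w = m, (upPeaks w).choose j := by
        refine sum_congr rfl fun m _ => ?_
        rw [g_eq_card, sum_congr rfl fun w hw => by rw [(mem_filter.1 hw).2], sum_const,
          smul_eq_mul, mul_comm]
    _ = ∑ w ∈ elevatedPaths n with upPeaks w ∈ Icc j (2 * n + 2), (upPeaks w).choose j :=
        sum_fiberwise_eq_sum_filter _ _ _ _
    _ = ∑ w ∈ elevatedPaths n, (upPeaks w).choose j := by
        refine sum_filter_of_ne fun w hw hne => mem_Icc.2 ⟨?_, ?_⟩
        · by_contra h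
          exact hne (Nat.choose_eq_zero_of_lt (by omega))
        · exact (upPeaks_le_length w).trans (mem_elevatedPaths.1 hw).length_eq.le

lemma sum_choose_upPeaks_eq_card (n j : ℕ) :
    ∑ w ∈ elevatedPaths n, (upPeaks w).choose j =
      #{x ∈ (elevatedPaths n).biUnion peakMarkings | x.count none = j} := by
  simp_rw [← card_filter_peakMarkings]
  exact sum_card_filter_eq_card_filter_biUnion (fun _ _ => mem_peakMarkings) _ _

lemma card_filter_biUnion_upMarkings (k j : ℕ) :
    #{x ∈ (elevatedPaths k).biUnion upMarkings | x.count none = j} =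
      (k + 1).choose j * catalan k := by
  rw [← sum_card_filter_eq_card_filter_biUnion (fun _ _ => mem_upMarkings),
    ← card_elevatedPaths, mul_comm, ← smul_eq_mul, ← sum_const]
  refine sum_congr rfl fun q hq => ?_
  rw [card_filter_upMarkings, (mem_elevatedPaths.1 hq).count_true]

lemma filter_biUnion_peakMarkings_eq (k j : ℕ) :
    {x ∈ (elevatedPaths (k + j)).biUnion peakMarkings | x.count none = j} =
      {x ∈ (elevatedPaths k).biUnion upMarkings | x.count none = j} := by
  ext x
  simp only [mem_filter, mem_biUnion, mem_elevatedPaths, mem_peakMarkings, mem_upMarkings,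
    exists_eq_right']
  refine and_congr_left fun hx => ?_
  rw [← hx, isElevatedDyckPath_expandMarks_iff]

end DyckPath

/-- For all `n ≥ 1` and `j ≥ 0`,
`∑_{m ≥ j} binom(m, j) · g_{n,m} = binom(n−j+1, j) · C_{n−j}`,
where `g_{n,m}` counts elevated Dyck paths of length `2n+2` with exactly
`m` up-peaks (the sum is finite since `g n m = 0` for `m > 2n+2`). -/
theorem sum_upPeaks_eq (n j : ℕ) (hn : 1 ≤ n) :
    ∑ m ∈ Finset.Icc j (2 * n + 2), m.choose j * g n m =
      (n - j + 1).choose j * catalan (n - j) := by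
  rw [DyckPath.sum_choose_mul_g, DyckPath.sum_choose_upPeaks_eq_card]
  rcases le_or_gt j n with hj | hj
  · obtain ⟨k, rfl⟩ := Nat.exists_eq_add_of_le' hj
    rw [Nat.add_sub_cancel, DyckPath.filter_biUnion_peakMarkings_eq,
      DyckPath.card_filter_biUnion_upMarkings]
  · rw [Nat.choose_eq_zero_of_lt (by omega), zero_mul, Finset.card_eq_zero,
      Finset.filter_eq_empty_iff]
    simp only [Finset.mem_biUnion, DyckPath.mem_elevatedPaths, DyckPath.mem_peakMarkings]
    rintro x ⟨w, hw, rfl⟩ hx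
    have := DyckPath.count_none_le_of_isElevatedDyckPath_expandMarks hw
    omega
end

section
/- For all integers n ≥ k ≥ 1, the following identity holds in ℤ[q]: ∑_{m=0}^{k−1} (−1)^m · binom(k−1, m) · binom(n−m, k) · q · (1−q)^{k−1−m} = ∑_{m=1}^{k} (−1)^{m−1} · binom(k−1, m−1) · binom(n−k+1, m) · q^m · (1−q)^{k−m}. -/
/-!
Writing `x = 1 - (1 - x)`, each term `x ^ (m + 1) * (1 - x) ^ (k - 1 - m)` on the right expands
binomially in powers of `1 - x`. After exchanging the two sums, the coefficient of
`x * (1 - x) ^ (k - 1 - j)` is `∑ m, C(k-1, m) C(m, j) C(n-k+1, m+1)`, which collapses to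
`C(k-1, j) C(n-j, k)` by trinomial revision followed by Vandermonde's identity.
-/

open Finset

namespace Nat

theorem sum_range_choose_mul_choose_add (b N r : ℕ) :
    ∑ s ∈ range (b + 1), b.choose s * N.choose (r + s) = (b + N).choose (r + b) := by
  rw [add_choose_eq, Nat.sum_antidiagonal_eq_sum_range_succ_mk,
    ← sum_subset (range_subset_range.2 (by omega : b + 1 ≤ r + b + 1)), ← sum_range_reflect]
  · refine sum_congr rfl fun s hs => ?_
    rw [mem_range] at hs
    rw [Nat.add_sub_cancel, choose_symm (by omega), show r + (b - s) = r + b - s by omega]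
  · intro i _ hi
    rw [mem_range, not_lt] at hi
    simp [choose_eq_zero_of_lt (by omega : b < i)]

theorem sum_range_choose_mul_choose_mul_choose_succ (a t N : ℕ) :
    ∑ m ∈ range (a + 1), a.choose m * m.choose t * N.choose (m + 1) =
      a.choose t * (N + (a - t)).choose (a + 1) := by
  rcases lt_or_ge a t with hat | hta
  · rw [choose_eq_zero_of_lt hat, zero_mul]
    exact sum_eq_zero fun m hm => by
      rw [choose_eq_zero_of_lt (by simp at hm; omega : m < t)]; simp
  obtain ⟨b, rfl⟩ := Nat.exists_eq_add_of_le hta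
  have hlow : ∑ m ∈ range t, (t + b).choose m * m.choose t * N.choose (m + 1) = 0 :=
    sum_eq_zero fun m hm => by rw [choose_eq_zero_of_lt (mem_range.1 hm)]; simp
  rw [add_assoc, sum_range_add, hlow, zero_add, Nat.add_sub_cancel_left, add_comm N,
    show t + (b + 1) = t + 1 + b by omega, ← sum_range_choose_mul_choose_add, mul_sum]
  refine sum_congr rfl fun s _ => ?_
  rw [choose_mul (le_add_right t s), Nat.add_sub_cancel_left, Nat.add_sub_cancel_left,
    add_right_comm t s 1]
  ring

end Nat

section CommRing

variable {R : Type*} [CommRing R]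

theorem neg_pow_mul_one_sub_pow_eq_sum (x : R) {m a : ℕ} (hma : m ≤ a) :
    (-x) ^ m * (1 - x) ^ (a - m) =
      ∑ j ∈ range (a + 1), (-1) ^ j * (m.choose j : R) * (1 - x) ^ (a - j) := by
  have hsplit : -x = -1 + (1 - x) := by ring
  rw [hsplit, add_pow, sum_mul, ← sum_subset (range_subset_range.2 (by omega : m + 1 ≤ a + 1))]
  · refine sum_congr rfl fun j hj => ?_
    rw [mem_range] at hj
    rw [show a - j = (m - j) + (a - m) by omega, pow_add]
    ring
  · intro j _ hj
    rw [mem_range, not_lt] at hj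
    simp [Nat.choose_eq_zero_of_lt (by omega : m < j)]

theorem sum_range_alternating_choose_mul_pow_mul_one_sub_pow (x : R) (a N : ℕ) :
    ∑ m ∈ range (a + 1), (-1) ^ m * ((a.choose m : R) * (N.choose (m + 1) : R)) *
        x ^ (m + 1) * (1 - x) ^ (a - m) =
      ∑ j ∈ range (a + 1), (-1) ^ j * ((a.choose j : R) * ((N + (a - j)).choose (a + 1) : R)) *
        x * (1 - x) ^ (a - j) := by
  calc _ = ∑ m ∈ range (a + 1), ∑ j ∈ range (a + 1),
          (a.choose m * m.choose j * N.choose (m + 1) : R) *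
            ((-1) ^ j * x * (1 - x) ^ (a - j)) := by
        refine sum_congr rfl fun m hm => ?_
        have hexp := neg_pow_mul_one_sub_pow_eq_sum x (Nat.lt_succ_iff.1 (mem_range.1 hm))
        calc _ = x * (a.choose m * N.choose (m + 1) : R) * ((-x) ^ m * (1 - x) ^ (a - m)) := by
              ring
          _ = _ := by
              rw [hexp, mul_sum]
              exact sum_congr rfl fun j _ => by ring
    _ = ∑ j ∈ range (a + 1), ∑ m ∈ range (a + 1),
          (a.choose m * m.choose j * N.choose (m + 1) : R) * ((-1) ^ j * x * (1 - x) ^ (a - j)) :=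
        sum_comm
    _ = _ := by
        refine sum_congr rfl fun j _ => ?_
        rw [← sum_mul]
        have hsum := congrArg (Nat.cast : ℕ → R)
          (Nat.sum_range_choose_mul_choose_mul_choose_succ a j N)
        push_cast at hsum
        rw [hsum]
        ring

end CommRing

theorem alternating_binomial_poly_identity_general (n k : ℕ) (hkn : k ≤ n) :
    ∑ m ∈ Finset.range k,
        (-1 : Polynomial ℤ) ^ m *
          Polynomial.C (((k - 1).choose m : ℤ) * ((n - m).choose k : ℤ)) *
          Polynomial.X * (1 - Polynomial.X) ^ (k - 1 - m) =
      ∑ m ∈ Finset.Icc 1 k,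
        (-1 : Polynomial ℤ) ^ (m - 1) *
          Polynomial.C (((k - 1).choose (m - 1) : ℤ) * ((n - k + 1).choose m : ℤ)) *
          Polynomial.X ^ m * (1 - Polynomial.X) ^ (k - m) := by
  obtain _ | a := k
  · simp
  obtain ⟨N, rfl⟩ := Nat.exists_eq_add_of_le (Nat.le_of_succ_le hkn)
  rw [← Ico_add_one_right_eq_Icc, sum_Ico_eq_sum_range,
    show a + N - (a + 1) + 1 = N by omega]
  simp only [map_mul, map_natCast, Nat.add_sub_cancel, add_comm 1, Nat.add_sub_add_right]
  rw [sum_range_alternating_choose_mul_pow_mul_one_sub_pow]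
  refine sum_congr rfl fun j hj => ?_
  rw [show a + N - j = N + (a - j) by simp at hj; omega]

/-- For all integers `n ≥ k ≥ 1`, the identity in `ℤ[q]`:
`∑_{m=0}^{k−1} (−1)^m·binom(k−1,m)·binom(n−m,k)·q·(1−q)^{k−1−m}
 = ∑_{m=1}^{k} (−1)^{m−1}·binom(k−1,m−1)·binom(n−k+1,m)·q^m·(1−q)^{k−m}`. -/
theorem alternating_binomial_poly_identity (n k : ℕ) (hk : 1 ≤ k) (hkn : k ≤ n) :
    ∑ m ∈ Finset.range k,
        (-1 : Polynomial ℤ) ^ m *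
          Polynomial.C (((k - 1).choose m : ℤ) * ((n - m).choose k : ℤ)) *
          Polynomial.X * (1 - Polynomial.X) ^ (k - 1 - m) =
      ∑ m ∈ Finset.Icc 1 k,
        (-1 : Polynomial ℤ) ^ (m - 1) *
          Polynomial.C (((k - 1).choose (m - 1) : ℤ) * ((n - k + 1).choose m : ℤ)) *
          Polynomial.X ^ m * (1 - Polynomial.X) ^ (k - m) :=
  alternating_binomial_poly_identity_general n k hkn
end

section
/- For every integer n ≥ 1, the following identity holds in the field of rational functions ℚ(q): C_n(q) = ∑_{r=1}^{n} (−1)^{r−1} T_r(n,q), where T_r(n,q) = q^{r²−r} · ((−q^{n−r+1}; q)_r / (−q; q)_r) · [n−r+1 choose r]_q · C_{n−r}(q) (Andrews' q-analogue of Koshy's formula). -/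
/-- The q-integer `[n]_x = 1 + x + ⋯ + x^{n−1}` in `ℚ(q)` (with `[0]_x = 0`). -/
noncomputable def qInt (x : RatFunc ℚ) (n : ℕ) : RatFunc ℚ := ∑ i ∈ Finset.range n, x ^ i

/-- The q-factorial `[n]_x! = [1]_x[2]_x⋯[n]_x`. -/
noncomputable def qFact (x : RatFunc ℚ) (n : ℕ) : RatFunc ℚ := ∏ i ∈ Finset.range n, qInt x (i + 1)

/-- The Gaussian binomial coefficient `[m choose k]_x = [m]_x!/([k]_x![m−k]_x!)`
for `0 ≤ k ≤ m`, and `0` if `k > m`. -/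
noncomputable def qBinom (x : RatFunc ℚ) (m k : ℕ) : RatFunc ℚ :=
  if k ≤ m then qFact x m / (qFact x k * qFact x (m - k)) else 0

/-- The q-Pochhammer symbol `(a; x)_r = (1−a)(1−ax)⋯(1−ax^{r−1})`. -/
noncomputable def qPoch (x a : RatFunc ℚ) (r : ℕ) : RatFunc ℚ :=
  ∏ i ∈ Finset.range r, (1 - a * x ^ i)

/-- The q-Catalan number `C_n(q) = (1/[n+1]_q)·[2n choose n]_q`. -/
noncomputable def qCatalan (x : RatFunc ℚ) (n : ℕ) : RatFunc ℚ :=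
  (1 / qInt x (n + 1)) * qBinom x (2 * n) n

/-!
Put `u_r = (-1)^r T_r(n, q)`, so that `u_0 = C_n(q)` and the claim is `∑_{r=0}^{n} u_r = 0`.
The term ratio `u_{r+1}/u_r = -q^{2r}[n-2r+1][n-2r]/([2r+2][2n-2r-1])` is rational in `q^r`, and
Gosper's algorithm finds the certificate `R(r) = -[2r][2n+1-2r]/([n][n+1])` with
`u_r = R(r+1) u_{r+1} - R(r) u_r`; after clearing denominators this is the q-integer identity
`[c+i][c+j] = [c][c+i+j] + q^c[i][j]`. The sum then telescopes to `R(n+1) u_{n+1} - R(0) u_0 = 0`.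
-/

open Polynomial

local notation "q" => (RatFunc.X : RatFunc ℚ)

section

variable (x : RatFunc ℚ)

lemma qInt_add (a b : ℕ) : qInt x (a + b) = qInt x a + x ^ a * qInt x b := by
  simp only [qInt, Finset.sum_range_add, pow_add, Finset.mul_sum]

lemma qInt_two_mul (m : ℕ) : qInt x (2 * m) = qInt x m * (1 + x ^ m) := by
  rw [two_mul, qInt_add]; ring

lemma qInt_add_mul_qInt_add (c i j : ℕ) :
    qInt x (c + i) * qInt x (c + j) = qInt x c * qInt x (c + i + j) + x ^ c * qInt x i * qInt x j := by
  have hc : (1 - x) * qInt x c = 1 - x ^ c := mul_neg_geom_sum x c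
  have hi : (1 - x) * qInt x i = 1 - x ^ i := mul_neg_geom_sum x i
  rw [qInt_add, qInt_add, add_assoc, qInt_add, qInt_add]
  linear_combination x ^ c * qInt x j * (qInt x i * hc - qInt x c * hi)

lemma qFact_succ (m : ℕ) : qFact x (m + 1) = qFact x m * qInt x (m + 1) :=
  Finset.prod_range_succ _ m

lemma qBinom_add (a b : ℕ) : qBinom x (a + b) a = qFact x (a + b) / (qFact x a * qFact x b) := by
  rw [qBinom, if_pos (Nat.le_add_right a b), Nat.add_sub_cancel_left]

lemma qCatalan_eq (m : ℕ) : qCatalan x m = qFact x (2 * m) / (qFact x (m + 1) * qFact x m) := by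
  rw [qCatalan, two_mul, qBinom_add, qFact_succ]
  ring

lemma qPoch_neg_pow_succ (k r : ℕ) :
    qPoch x (-(x ^ k)) (r + 1) = (1 + x ^ k) * qPoch x (-(x ^ (k + 1))) r := by
  simp only [qPoch, Finset.prod_range_succ', pow_succ, pow_zero, mul_one, neg_mul, sub_neg_eq_add]
  rw [mul_comm]
  congr 1
  exact Finset.prod_congr rfl fun i _ => by ring

lemma qPoch_neg_succ (r : ℕ) : qPoch x (-x) (r + 1) = qPoch x (-x) r * (1 + x ^ (r + 1)) := by
  simp only [qPoch, Finset.prod_range_succ]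
  ring

end

lemma algebraMap_ne_zero_of_eval_one_ne_zero {p : ℚ[X]} (h : p.eval 1 ≠ 0) :
    algebraMap ℚ[X] (RatFunc ℚ) p ≠ 0 := fun h0 =>
  h (by rw [(map_eq_zero_iff _ (RatFunc.algebraMap_injective ℚ)).mp h0, eval_zero])

lemma qInt_X_ne_zero {k : ℕ} (hk : k ≠ 0) : qInt q k ≠ 0 := by
  have : qInt q k = algebraMap ℚ[X] (RatFunc ℚ) (∑ i ∈ Finset.range k, X ^ i) := by
    simp [qInt, RatFunc.algebraMap_X]
  rw [this]
  exact algebraMap_ne_zero_of_eval_one_ne_zero (by simpa [eval_finsetSum] using hk)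

lemma one_add_X_pow_ne_zero (k : ℕ) : 1 + q ^ k ≠ 0 := by
  have : 1 + q ^ k = algebraMap ℚ[X] (RatFunc ℚ) (1 + X ^ k) := by
    simp [RatFunc.algebraMap_X]
  rw [this]
  exact algebraMap_ne_zero_of_eval_one_ne_zero (by norm_num)

lemma qFact_X_ne_zero (m : ℕ) : qFact q m ≠ 0 :=
  Finset.prod_ne_zero_iff.mpr fun i _ => qInt_X_ne_zero i.succ_ne_zero

lemma qPoch_X_neg_X_ne_zero (r : ℕ) : qPoch q (-q) r ≠ 0 :=
  Finset.prod_ne_zero_iff.mpr fun i _ => by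
    simpa [pow_succ'] using one_add_X_pow_ne_zero (i + 1)

lemma qBinom_succ_mul (r t : ℕ) :
    qBinom q (r + t + 1) (r + 1) * (qInt q (r + 1) * qInt q (r + t + 2)) =
      qBinom q (r + t + 2) r * (qInt q (t + 1) * qInt q (t + 2)) := by
  rw [show r + t + 1 = (r + 1) + t by ring, qBinom_add, show r + t + 2 = r + (t + 2) by ring,
    qBinom_add, qFact_succ _ r, show r + (t + 2) = (r + 1 + t) + 1 by ring, qFact_succ _ (r + 1 + t),
    qFact_succ _ (t + 1), qFact_succ _ t]
  have := qFact_X_ne_zero r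
  have := qFact_X_ne_zero t
  have := qFact_X_ne_zero (r + 1 + t)
  have := qInt_X_ne_zero (Nat.succ_ne_zero r)
  have := qInt_X_ne_zero (Nat.succ_ne_zero (t + 1))
  have := qInt_X_ne_zero (Nat.succ_ne_zero t)
  field_simp

lemma qCatalan_succ_mul (m : ℕ) :
    qCatalan q (m + 1) * qInt q (m + 2) = qCatalan q m * ((1 + q ^ (m + 1)) * qInt q (2 * m + 1)) := by
  rw [qCatalan_eq, qCatalan_eq, show 2 * (m + 1) = 2 * m + 1 + 1 by ring, qFact_succ _ (2 * m + 1),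
    qFact_succ _ (2 * m), show 2 * m + 1 + 1 = 2 * (m + 1) by ring, qInt_two_mul,
    qFact_succ _ (m + 1), qFact_succ _ m]
  have := qFact_X_ne_zero m
  have := qInt_X_ne_zero (Nat.succ_ne_zero m)
  have := qInt_X_ne_zero (Nat.succ_ne_zero (m + 1))
  field_simp

/-- `(-1)^r T_r(n, q)`, i.e. minus the `r`-th summand; at `r = 0` it is `C_n(q)`. -/
noncomputable def koshyTerm (n r : ℕ) : RatFunc ℚ :=
  (-1) ^ r * (q ^ (r ^ 2 - r) * (qPoch q (-(q ^ (n - r + 1))) r / qPoch q (-q) r) *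
    qBinom q (n - r + 1) r * qCatalan q (n - r))

lemma koshyTerm_zero (n : ℕ) : koshyTerm n 0 = qCatalan q n := by
  simp [koshyTerm, qPoch, qBinom, show qFact q 0 = 1 from Finset.prod_range_zero _, qFact_X_ne_zero]

lemma koshyTerm_eq_zero {n r : ℕ} (hn : 1 ≤ n) (h : n + 1 < 2 * r) : koshyTerm n r = 0 := by
  rw [koshyTerm, qBinom, if_neg (by omega), mul_zero, zero_mul, mul_zero]

lemma koshyTerm_succ_mul (r t : ℕ) :
    koshyTerm (2 * r + 1 + t) (r + 1) * (qInt q (2 * r + 2) * qInt q (2 * r + 2 * t + 1)) =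
      -(q ^ (2 * r) * qInt q (t + 1) * qInt q (t + 2)) * koshyTerm (2 * r + 1 + t) r := by
  have hB := qBinom_succ_mul r t
  have hC := qCatalan_succ_mul (r + t)
  have hexp : (r + 1) ^ 2 - (r + 1) = r ^ 2 - r + 2 * r := by
    have := Nat.le_self_pow two_ne_zero r
    rw [add_sq]; omega
  simp only [koshyTerm, hexp, show 2 * r + 1 + t - (r + 1) = r + t by omega,
    show 2 * r + 1 + t - r = r + t + 1 by omega, show r + t + 1 + 1 = r + t + 2 by ring,
    show 2 * (r + t) + 1 = 2 * r + 2 * t + 1 by ring, qPoch_neg_pow_succ, qPoch_neg_succ,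
    show 2 * r + 2 = 2 * (r + 1) by ring, qInt_two_mul] at hC ⊢
  have := qPoch_X_neg_X_ne_zero r
  have := one_add_X_pow_ne_zero (r + 1)
  field_simp
  refine mul_right_cancel₀ (qInt_X_ne_zero (show r + t + 2 ≠ 0 by omega)) ?_
  linear_combination (-1) ^ (r + 1) * q ^ (r ^ 2 - r + 2 * r) * qPoch q (-q ^ (r + t + 2)) r *
    (qCatalan q (r + t) * ((1 + q ^ (r + t + 1)) * qInt q (2 * r + 2 * t + 1)) * hB -
      qBinom q (r + t + 2) r * (qInt q (t + 1) * qInt q (t + 2)) * hC)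

noncomputable def koshyCert (n r : ℕ) : RatFunc ℚ :=
  -(qInt q (2 * r) * qInt q (2 * n + 1 - 2 * r)) / (qInt q n * qInt q (n + 1))

lemma koshyCert_eq_neg_one {n r : ℕ} (hn : 1 ≤ n) (h₁ : n ≤ 2 * r) (h₂ : 2 * r ≤ n + 1) :
    koshyCert n r = -1 := by
  have := qInt_X_ne_zero (show n ≠ 0 by omega)
  have := qInt_X_ne_zero n.succ_ne_zero
  rcases (by omega : 2 * r = n ∨ 2 * r = n + 1) with h | h
  · rw [koshyCert, h, show 2 * n + 1 - n = n + 1 by omega]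
    field_simp
  · rw [koshyCert, h, show 2 * n + 1 - (n + 1) = n by omega]
    field_simp

lemma koshyTerm_eq_cert_sub_of_lt (r t : ℕ) :
    koshyTerm (2 * r + 1 + t) r =
      koshyCert (2 * r + 1 + t) (r + 1) * koshyTerm (2 * r + 1 + t) (r + 1) -
        koshyCert (2 * r + 1 + t) r * koshyTerm (2 * r + 1 + t) r := by
  have hu := koshyTerm_succ_mul r t
  have hq := qInt_add_mul_qInt_add q (2 * r) (t + 1) (t + 2)
  rw [show 2 * r + (t + 1) + (t + 2) = 2 * (2 * r + 1 + t) + 1 - 2 * r by omega,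
    show 2 * r + (t + 1) = 2 * r + 1 + t by ring, show 2 * r + (t + 2) = 2 * r + 1 + t + 1 by ring] at hq
  have := qInt_X_ne_zero (show 2 * r + 1 + t ≠ 0 by omega)
  have := qInt_X_ne_zero (show 2 * r + 1 + t + 1 ≠ 0 by omega)
  rw [koshyCert, koshyCert, show 2 * (2 * r + 1 + t) + 1 - 2 * (r + 1) = 2 * r + 2 * t + 1 by omega,
    show 2 * (r + 1) = 2 * r + 2 by ring]
  field_simp
  linear_combination koshyTerm (2 * r + 1 + t) r * hq + hu

lemma koshyTerm_eq_cert_sub {n r : ℕ} (hn : 1 ≤ n) :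
    koshyTerm n r = koshyCert n (r + 1) * koshyTerm n (r + 1) - koshyCert n r * koshyTerm n r := by
  rcases lt_or_ge (2 * r) n with h | h
  · obtain ⟨t, rfl⟩ : ∃ t, n = 2 * r + 1 + t := ⟨n - (2 * r + 1), by omega⟩
    exact koshyTerm_eq_cert_sub_of_lt r t
  rcases le_or_gt (2 * r) (n + 1) with h' | h'
  · rw [koshyTerm_eq_zero hn (by omega : n + 1 < 2 * (r + 1)), koshyCert_eq_neg_one hn h h']
    ring
  · rw [koshyTerm_eq_zero hn h', koshyTerm_eq_zero hn (by omega : n + 1 < 2 * (r + 1))]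
    ring

lemma sum_koshyTerm {n : ℕ} (hn : 1 ≤ n) : ∑ r ∈ Finset.range (n + 1), koshyTerm n r = 0 := by
  rw [Finset.sum_congr rfl fun r _ => koshyTerm_eq_cert_sub hn,
    Finset.sum_range_sub (fun r => koshyCert n r * koshyTerm n r),
    koshyTerm_eq_zero hn (by omega : n + 1 < 2 * (n + 1))]
  simp [koshyCert, qInt]

/-- **Andrews' q-analogue of Koshy's formula.** For every `n ≥ 1`, in `ℚ(q)`:
`C_n(q) = ∑_{r=1}^{n} (−1)^{r−1} T_r(n,q)` where
`T_r(n,q) = q^{r²−r}·((−q^{n−r+1};q)_r/(−q;q)_r)·[n−r+1 choose r]_q·C_{n−r}(q)`. -/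
theorem andrews_q_koshy (n : ℕ) (hn : 1 ≤ n) :
    qCatalan RatFunc.X n =
      ∑ r ∈ Finset.Icc 1 n,
        (-1 : RatFunc ℚ) ^ (r - 1) *
          (RatFunc.X ^ (r ^ 2 - r) *
            (qPoch RatFunc.X (-(RatFunc.X ^ (n - r + 1))) r / qPoch RatFunc.X (-RatFunc.X) r) *
            qBinom RatFunc.X (n - r + 1) r * qCatalan RatFunc.X (n - r)) := by
  have hsum := sum_koshyTerm hn
  rw [Finset.range_eq_Ico, Finset.sum_eq_sum_Ico_succ_bot (by omega), koshyTerm_zero, zero_add,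
    Finset.Ico_add_one_right_eq_Icc] at hsum
  rw [eq_neg_of_add_eq_zero_left hsum, ← Finset.sum_neg_distrib]
  refine Finset.sum_congr rfl fun r hr => ?_
  obtain ⟨k, rfl⟩ : ∃ k, r = k + 1 := ⟨r - 1, by grind⟩
  rw [koshyTerm, pow_succ, Nat.add_sub_cancel]
  ring
end

section
/- For all integers n ≥ 2 and r ≥ 0, the following identity holds in ℤ[q]: [n−1]_q · [n choose r]_{q²} · [2n−2r choose n−1]_q = [2n]_q · [n−1 choose r]_{q²} · [2n−2r−1 choose n−2]_q. -/
open Polynomial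

/-- The q-integer `[n]_q = 1 + q + ⋯ + q^{n−1}` as a polynomial in `ℤ[q]`
(with `[0]_q = 0`). -/
noncomputable def qIntP (n : ℕ) : Polynomial ℤ := ∑ i ∈ Finset.range n, Polynomial.X ^ i

/-- The q-factorial `[n]_q! = [1]_q[2]_q⋯[n]_q` in `ℤ[q]`. -/
noncomputable def qFactP (n : ℕ) : Polynomial ℤ := ∏ i ∈ Finset.range n, qIntP (i + 1)

/-- The Gaussian binomial coefficient `[m choose k]_q = [m]_q!/([k]_q![m−k]_q!)`
as a polynomial in `ℤ[q]` (the division, by a monic polynomial, is exact),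
and `0` if `k > m`. -/
noncomputable def qBinomP (m k : ℕ) : Polynomial ℤ :=
  if k ≤ m then qFactP m /ₘ (qFactP k * qFactP (m - k)) else 0

/-- The Gaussian binomial coefficient `[m choose k]_{q²}`, i.e. `[m choose k]_q`
with `q` replaced by `q²`. -/
noncomputable def qBinomP2 (m k : ℕ) : Polynomial ℤ := (qBinomP m k).comp (Polynomial.X ^ 2)

/-!
Both sides are absorbed into the same product. The absorption identities
`[m+1 choose k+1]_q [k+1]_q = [m+1]_q [m choose k]_q` and
`[m+1 choose k]_q [m+1-k]_q = [m+1]_q [m choose k]_q`, together with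
`[2m]_q = [m]_{q²} (1 + q)`, show that multiplying either side by `[2n-2r]_q` gives
`(1 + q) [n]_{q²} [n-1 choose r]_{q²} [2n-2r]_q [2n-2r-1 choose n-2]_q`.
For `r < n` the factor `[2n-2r]_q` is nonzero and cancels; for `r ≥ n` both sides vanish.
-/

lemma qIntP_succ (m : ℕ) : qIntP (m + 1) = qIntP m + X ^ m := by
  simp only [qIntP, Finset.sum_range_succ]

lemma qIntP_add (a b : ℕ) : qIntP (a + b) = qIntP a + X ^ a * qIntP b := by
  simp only [qIntP, Finset.sum_range_add, Finset.mul_sum, pow_add]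

lemma qIntP_two_mul (m : ℕ) : qIntP (2 * m) = (qIntP m).comp (X ^ 2) * (1 + X) := by
  induction m with
  | zero => simp [qIntP]
  | succ m ih =>
    rw [show 2 * (m + 1) = 2 * m + 1 + 1 by ring, qIntP_succ, qIntP_succ, ih,
      qIntP_succ, add_comp, X_pow_comp]
    ring

lemma degree_qIntP_lt (m : ℕ) : (qIntP m).degree < m := by
  induction m with
  | zero => simp [qIntP]
  | succ m ih =>
    rw [qIntP_succ]
    refine (degree_add_le _ _).trans_lt (max_lt (ih.trans ?_) ?_)
    · exact_mod_cast Nat.lt_succ_self m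
    · rw [degree_X_pow]; exact_mod_cast Nat.lt_succ_self m

lemma monic_qIntP_succ (m : ℕ) : (qIntP (m + 1)).Monic := by
  rw [qIntP_succ]
  exact (monic_X_pow m).add_of_right (by rw [degree_X_pow]; exact degree_qIntP_lt m)

lemma qFactP_succ (n : ℕ) : qFactP (n + 1) = qFactP n * qIntP (n + 1) :=
  Finset.prod_range_succ _ _

lemma monic_qFactP (n : ℕ) : (qFactP n).Monic :=
  monic_prod_of_monic _ _ fun i _ => monic_qIntP_succ i

lemma qFactP_mul_qFactP_dvd {k m : ℕ} (h : k ≤ m) : qFactP k * qFactP (m - k) ∣ qFactP m := by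
  induction m generalizing k with
  | zero => simp [Nat.le_zero.mp h, qFactP]
  | succ m ih =>
    rcases k with _ | j
    · simp [qFactP]
    rcases (Nat.succ_le_succ_iff.mp h).eq_or_lt with rfl | hj
    · simp [qFactP]
    -- Each summand of `[m]_q! ([j+1]_q + q^(j+1) [m-j]_q)` is a multiple by induction.
    have hsplit : qIntP (m + 1) = qIntP (j + 1) + X ^ (j + 1) * qIntP (m - j) := by
      rw [← qIntP_add]; congr 1; omega
    have hleft : qFactP (j + 1) * qFactP (m + 1 - (j + 1)) ∣ qFactP m * qIntP (j + 1) := by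
      rw [Nat.add_sub_add_right, qFactP_succ j, mul_right_comm]
      exact mul_dvd_mul (ih hj.le) dvd_rfl
    have hright : qFactP (j + 1) * qFactP (m + 1 - (j + 1)) ∣ qFactP m * qIntP (m - j) := by
      rw [Nat.add_sub_add_right, show m - j = m - (j + 1) + 1 by omega,
        qFactP_succ (m - (j + 1)), ← mul_assoc]
      exact mul_dvd_mul (ih hj) dvd_rfl
    rw [qFactP_succ m, hsplit, mul_add, mul_left_comm]
    exact dvd_add hleft (dvd_mul_of_dvd_right hright _)

lemma qBinomP_mul_qFactP_mul_qFactP {m k : ℕ} (h : k ≤ m) :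
    qBinomP m k * (qFactP k * qFactP (m - k)) = qFactP m := by
  obtain ⟨c, hc⟩ := qFactP_mul_qFactP_dvd h
  rw [qBinomP, if_pos h, hc, mul_divByMonic_cancel_left c ((monic_qFactP k).mul (monic_qFactP _)),
    mul_comm]

lemma qBinomP_of_lt {m k : ℕ} (h : m < k) : qBinomP m k = 0 :=
  if_neg h.not_ge

lemma qBinomP_succ_succ_mul_qIntP_succ (m k : ℕ) :
    qBinomP (m + 1) (k + 1) * qIntP (k + 1) = qIntP (m + 1) * qBinomP m k := by
  rcases lt_or_ge m k with h | h
  · simp [qBinomP_of_lt h, qBinomP_of_lt (Nat.succ_lt_succ h)]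
  refine mul_right_cancel₀ ((monic_qFactP k).mul (monic_qFactP (m - k))).ne_zero ?_
  calc qBinomP (m + 1) (k + 1) * qIntP (k + 1) * (qFactP k * qFactP (m - k))
      = qBinomP (m + 1) (k + 1) * (qFactP (k + 1) * qFactP (m + 1 - (k + 1))) := by
        rw [qFactP_succ, Nat.add_sub_add_right]; ring
    _ = qIntP (m + 1) * qBinomP m k * (qFactP k * qFactP (m - k)) := by
        rw [qBinomP_mul_qFactP_mul_qFactP (Nat.succ_le_succ h), mul_assoc,
          qBinomP_mul_qFactP_mul_qFactP h, qFactP_succ, mul_comm]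

lemma qBinomP_succ_mul_qIntP_sub (m k : ℕ) :
    qBinomP (m + 1) k * qIntP (m + 1 - k) = qIntP (m + 1) * qBinomP m k := by
  rcases lt_or_ge m k with h | h
  · rcases (Nat.succ_le_of_lt h).eq_or_lt with rfl | h'
    · simp [qBinomP_of_lt h, qIntP]
    · simp [qBinomP_of_lt h, qBinomP_of_lt h']
  refine mul_right_cancel₀ ((monic_qFactP k).mul (monic_qFactP (m - k))).ne_zero ?_
  calc qBinomP (m + 1) k * qIntP (m + 1 - k) * (qFactP k * qFactP (m - k))
      = qBinomP (m + 1) k * (qFactP k * qFactP (m + 1 - k)) := by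
        rw [show m + 1 - k = m - k + 1 by omega, qFactP_succ]; ring
    _ = qIntP (m + 1) * qBinomP m k * (qFactP k * qFactP (m - k)) := by
        rw [qBinomP_mul_qFactP_mul_qFactP (h.trans (Nat.le_succ m)), mul_assoc,
          qBinomP_mul_qFactP_mul_qFactP h, qFactP_succ, mul_comm]

/-- For `n ≥ 2` and `r ≥ 0`, the identity in `ℤ[q]`:
`[n−1]_q·[n choose r]_{q²}·[2n−2r choose n−1]_q
 = [2n]_q·[n−1 choose r]_{q²}·[2n−2r−1 choose n−2]_q`. -/
theorem qint_qbinom_identity (n r : ℕ) (hn : 2 ≤ n) :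
    qIntP (n - 1) * qBinomP2 n r * qBinomP (2 * n - 2 * r) (n - 1) =
      qIntP (2 * n) * qBinomP2 (n - 1) r * qBinomP (2 * n - 2 * r - 1) (n - 2) := by
  rcases lt_or_ge r n with hr | hr
  · have habsorb : qBinomP (2 * n - 2 * r) (n - 1) * qIntP (n - 1) =
        qIntP (2 * n - 2 * r) * qBinomP (2 * n - 2 * r - 1) (n - 2) := by
      have h := qBinomP_succ_succ_mul_qIntP_succ (2 * n - 2 * r - 1) (n - 2)
      rwa [show 2 * n - 2 * r - 1 + 1 = 2 * n - 2 * r by omega,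
        show n - 2 + 1 = n - 1 by omega] at h
    have habsorb2 : qBinomP2 n r * (qIntP (n - r)).comp (X ^ 2) =
        (qIntP n).comp (X ^ 2) * qBinomP2 (n - 1) r := by
      have h := qBinomP_succ_mul_qIntP_sub (n - 1) r
      rw [show n - 1 + 1 = n by omega] at h
      simp only [qBinomP2, ← mul_comp, h]
    have hdouble : qIntP (2 * n - 2 * r) = (qIntP (n - r)).comp (X ^ 2) * (1 + X) := by
      rw [← qIntP_two_mul]; congr 1; omega
    have hne : qIntP (2 * n - 2 * r) ≠ 0 := by
      rw [show 2 * n - 2 * r = 2 * n - 2 * r - 1 + 1 by omega]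
      exact (monic_qIntP_succ _).ne_zero
    refine mul_right_cancel₀ hne ?_
    linear_combination
      qIntP (n - 1) * qBinomP2 n r * qBinomP (2 * n - 2 * r) (n - 1) * hdouble
      + qIntP (n - 1) * qBinomP (2 * n - 2 * r) (n - 1) * (1 + X) * habsorb2
      + (qIntP n).comp (X ^ 2) * qBinomP2 (n - 1) r * (1 + X) * habsorb
      - qIntP (2 * n - 2 * r) * qBinomP (2 * n - 2 * r - 1) (n - 2) * qBinomP2 (n - 1) r
        * qIntP_two_mul n
  · rw [qBinomP_of_lt (show 2 * n - 2 * r < n - 1 by omega), qBinomP2, qBinomP2,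
      qBinomP_of_lt (show n - 1 < r by omega)]
    simp
end

section
/- For all integers n ≥ 1 and j ≥ 1, the q-Ballot number satisfies, in the field of rational functions ℚ(q): B_j(n,q) = ∑_{r=1}^{n} (−1)^{r−1} T_r^{(j)}(n,q), where T_r^{(j)}(n,q) = q^{r²−r} · [n choose r]_{q²} · [2n+j−1−2r choose n−1]_q · [j]_q / [n]_q. -/
/-- The q-Ballot number `B_j(n,q) = ([j]_q/[2n+j]_q)·[2n+j choose n]_q`. -/
noncomputable def qBallot (x : RatFunc ℚ) (j n : ℕ) : RatFunc ℚ :=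
  (qInt x j / qInt x (2 * n + j)) * qBinom x (2 * n + j) n

open Finset Polynomial

namespace QBallot

section Pochhammer

variable {R : Type*} [CommRing R]

def qPochhammer (a y : R) (k : ℕ) : R := ∏ i ∈ range k, (1 - a * y ^ i)

theorem qPochhammer_succ (a y : R) (k : ℕ) :
    qPochhammer a y (k + 1) = qPochhammer a y k * (1 - a * y ^ k) :=
  prod_range_succ _ _

theorem qPochhammer_add (a y : R) (m k : ℕ) :
    qPochhammer a y (m + k) = qPochhammer a y m * qPochhammer (a * y ^ m) y k := by
  simp only [qPochhammer, prod_range_add, pow_add, mul_assoc]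

theorem qPochhammer_eq_zero {a y : R} {i k : ℕ} (hi : i < k) (h : a * y ^ i = 1) :
    qPochhammer a y k = 0 :=
  prod_eq_zero (mem_range.2 hi) (by rw [h, sub_self])

theorem eval_qPochhammer (a y w : R) (k : ℕ) :
    (qPochhammer (C a * X) (C y) k).eval w = qPochhammer (a * w) y k := by
  simp [qPochhammer, eval_prod]

theorem natDegree_qPochhammer_le (a y : R) (k : ℕ) :
    (qPochhammer (C a * X) (C y) k).natDegree ≤ k := by
  refine (natDegree_prod_le _ _).trans ((sum_le_card_nsmul _ _ 1 fun i _ => ?_).trans (by simp))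
  compute_degree

end Pochhammer

section QAnalogues

variable {y : RatFunc ℚ}

theorem pow_ne_one_of_not_isOfFinOrder (hy : ¬IsOfFinOrder y) {i : ℕ} (hi : 0 < i) : y ^ i ≠ 1 :=
  fun h => hy (isOfFinOrder_iff_pow_eq_one.2 ⟨i, hi, h⟩)

theorem qInt_add (y : RatFunc ℚ) (a b : ℕ) : qInt y (a + b) = qInt y a + y ^ a * qInt y b := by
  simp only [qInt, sum_range_add, pow_add, mul_sum]

theorem qInt_ne_zero {n : ℕ} (hy : y ^ n ≠ 1) : qInt y n ≠ 0 := by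
  intro h
  have := geom_sum_mul_neg y n
  rw [← qInt, h, zero_mul] at this
  exact hy (sub_eq_zero.1 this.symm).symm

theorem qFact_zero (y : RatFunc ℚ) : qFact y 0 = 1 :=
  prod_range_zero _

theorem qFact_succ (y : RatFunc ℚ) (n : ℕ) : qFact y (n + 1) = qFact y n * qInt y (n + 1) :=
  prod_range_succ _ _

theorem qFact_mul_one_sub_pow (y : RatFunc ℚ) (n : ℕ) :
    qFact y n * (1 - y) ^ n = qPochhammer y y n := by
  rw [qFact, ← card_range n, ← prod_const, card_range, ← prod_mul_distrib]
  refine prod_congr rfl fun i _ => ?_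
  rw [qInt, geom_sum_mul_neg, pow_succ']

theorem qFact_ne_zero (hy : ¬IsOfFinOrder y) (n : ℕ) : qFact y n ≠ 0 :=
  prod_ne_zero_iff.2 fun i _ => qInt_ne_zero (pow_ne_one_of_not_isOfFinOrder hy i.succ_pos)

theorem qPochhammer_self_ne_zero (hy : ¬IsOfFinOrder y) (n : ℕ) : qPochhammer y y n ≠ 0 := by
  rw [← qFact_mul_one_sub_pow]
  refine mul_ne_zero (qFact_ne_zero hy n) (pow_ne_zero _ (sub_ne_zero.2 ?_))
  simpa using (pow_ne_one_of_not_isOfFinOrder hy one_pos).symm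

theorem qBinom_zero_right (hy : ¬IsOfFinOrder y) (m : ℕ) : qBinom y m 0 = 1 := by
  rw [qBinom, if_pos m.zero_le, Nat.sub_zero, qFact_zero, one_mul, div_self (qFact_ne_zero hy m)]

theorem qBinom_of_lt {m k : ℕ} (h : m < k) : qBinom y m k = 0 :=
  if_neg (not_le.2 h)

theorem qBinom_succ_succ_mul (hy : ¬IsOfFinOrder y) (m k : ℕ) :
    qBinom y (m + 1) (k + 1) * qInt y (k + 1) = qBinom y m k * qInt y (m + 1) := by
  rcases le_or_gt k m with hk | hk
  · have := qInt_ne_zero (pow_ne_one_of_not_isOfFinOrder hy k.succ_pos)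
    rw [qBinom, qBinom, if_pos hk, if_pos (by omega), Nat.add_sub_add_right, qFact_succ,
      qFact_succ]
    field_simp [qFact_ne_zero hy]
  · rw [qBinom_of_lt hk, qBinom_of_lt (by omega), zero_mul, zero_mul]

theorem qBinom_succ_mul (hy : ¬IsOfFinOrder y) (m k : ℕ) :
    qBinom y m (k + 1) * qInt y (k + 1) = qBinom y m k * qInt y (m - k) := by
  rcases lt_or_ge k m with hk | hk
  · obtain ⟨d, rfl⟩ := Nat.exists_eq_add_of_lt hk
    have := qInt_ne_zero (pow_ne_one_of_not_isOfFinOrder hy (Nat.succ_pos d))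
    have := qInt_ne_zero (pow_ne_one_of_not_isOfFinOrder hy k.succ_pos)
    rw [qBinom, qBinom, if_pos (by omega), if_pos (by omega), show k + d + 1 - (k + 1) = d by omega,
      show k + d + 1 - k = d + 1 by omega, qFact_succ y k, qFact_succ y d]
    field_simp [qFact_ne_zero hy]
  · rw [qBinom_of_lt (by omega), Nat.sub_eq_zero_of_le hk]
    simp [qInt]

theorem qBinom_succ_succ (hy : ¬IsOfFinOrder y) {m k : ℕ} (hk : k ≤ m) :
    qBinom y (m + 1) (k + 1) = qBinom y m (k + 1) + y ^ (m - k) * qBinom y m k := by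
  refine mul_right_cancel₀ (qInt_ne_zero (pow_ne_one_of_not_isOfFinOrder hy k.succ_pos)) ?_
  rw [qBinom_succ_succ_mul hy, add_mul, qBinom_succ_mul hy, show m + 1 = m - k + (k + 1) by omega,
    qInt_add]
  ring

theorem qBinom_mul_qPochhammer (hy : ¬IsOfFinOrder y) {m k : ℕ} (hk : k ≤ m) :
    qBinom y m k * qPochhammer y y k = qPochhammer (y ^ (m - k + 1)) y k := by
  obtain ⟨d, rfl⟩ := Nat.exists_eq_add_of_le hk
  refine mul_left_cancel₀ (qPochhammer_self_ne_zero hy d) ?_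
  rw [qBinom, if_pos hk, Nat.add_sub_cancel_left, pow_succ', ← qPochhammer_add, add_comm d k,
    ← qFact_mul_one_sub_pow, ← qFact_mul_one_sub_pow, ← qFact_mul_one_sub_pow, pow_add]
  field_simp [qFact_ne_zero hy]

/-- Rothe's q-binomial theorem. -/
theorem sum_qBinom_mul_pow (hy : ¬IsOfFinOrder y) (z : RatFunc ℚ) (n : ℕ) :
    ∑ r ∈ range (n + 1), (-1) ^ r * y ^ r.choose 2 * qBinom y n r * z ^ r = qPochhammer z y n := by
  induction n with
  | zero => simp [qPochhammer, qBinom_zero_right hy]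
  | succ n ih =>
    have pascal : ∀ s ∈ range (n + 1),
        (-1) ^ (s + 1) * y ^ (s + 1).choose 2 * qBinom y (n + 1) (s + 1) * z ^ (s + 1) =
          (-1) ^ (s + 1) * y ^ (s + 1).choose 2 * qBinom y n (s + 1) * z ^ (s + 1) +
            -(z * y ^ n) * ((-1) ^ s * y ^ s.choose 2 * qBinom y n s * z ^ s) := by
      intro s hs
      have hsn : s ≤ n := Nat.lt_succ_iff.1 (mem_range.1 hs)
      have hexp : y ^ (s + 1).choose 2 * y ^ (n - s) = y ^ s.choose 2 * y ^ n := by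
        rw [← pow_add, ← pow_add]
        have hchoose : (s + 1).choose 2 = s + s.choose 2 :=
          (Nat.choose_succ_succ' s 1).trans (by rw [Nat.choose_one_right])
        rw [hchoose]
        congr 1
        omega
      rw [qBinom_succ_succ hy hsn]
      linear_combination (-1) ^ (s + 1) * qBinom y n s * z ^ (s + 1) * hexp
    calc ∑ r ∈ range (n + 2), (-1) ^ r * y ^ r.choose 2 * qBinom y (n + 1) r * z ^ r
        = ∑ r ∈ range (n + 2), (-1) ^ r * y ^ r.choose 2 * qBinom y n r * z ^ r +
            -(z * y ^ n) *
              ∑ r ∈ range (n + 1), (-1) ^ r * y ^ r.choose 2 * qBinom y n r * z ^ r := by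
          rw [sum_range_succ', sum_range_succ' _ (n + 1), sum_congr rfl pascal, sum_add_distrib,
            mul_sum, qBinom_zero_right hy, qBinom_zero_right hy]
          ring
      _ = qPochhammer z y (n + 1) := by
          rw [sum_range_succ, qBinom_of_lt n.lt_succ_self, ih, qPochhammer_succ]
          ring

theorem sum_qBinom_mul_inv_pow_eq_zero (hy : ¬IsOfFinOrder y) (hy0 : y ≠ 0) {n k : ℕ}
    (hk : k < n) :
    ∑ r ∈ range (n + 1), (-1) ^ r * y ^ r.choose 2 * qBinom y n r * (y⁻¹ ^ k) ^ r = 0 := by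
  rw [sum_qBinom_mul_pow hy]
  exact qPochhammer_eq_zero hk (by rw [inv_pow, inv_mul_cancel₀ (pow_ne_zero k hy0)])

theorem sum_qBinom_mul_eval_eq_zero (hy : ¬IsOfFinOrder y) (hy0 : y ≠ 0) {n : ℕ}
    {p : (RatFunc ℚ)[X]} (hp : p.natDegree < n) :
    ∑ r ∈ range (n + 1), (-1) ^ r * y ^ r.choose 2 * qBinom y n r * p.eval (y⁻¹ ^ r) = 0 := by
  simp_rw [eval_eq_sum_range' hp, mul_sum]
  rw [sum_comm]
  refine sum_eq_zero fun k hk => ?_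
  simp_rw [← pow_mul, mul_comm _ k, pow_mul, mul_left_comm _ (p.coeff k), ← mul_sum]
  rw [sum_qBinom_mul_inv_pow_eq_zero hy hy0 (mem_range.1 hk), mul_zero]

end QAnalogues

section Koshy

variable {x : RatFunc ℚ}

theorem qBinom_mul_qPochhammer_eq_eval (hx : ¬IsOfFinOrder x) (hx0 : x ≠ 0) {n j r : ℕ}
    (hn : 1 ≤ n) (hj : 1 ≤ j) (hr : r ≤ n) :
    qBinom x (2 * n + j - 1 - 2 * r) (n - 1) * qPochhammer x x (n - 1) =
      (qPochhammer (C (x ^ (n + j + 1)) * X) (C x) (n - 1)).eval ((x ^ 2)⁻¹ ^ r) := by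
  rw [eval_qPochhammer, inv_pow, ← pow_mul]
  rcases le_or_gt (2 * r) (n + j) with h | h
  · rw [qBinom_mul_qPochhammer hx (by omega), ← pow_sub₀ x hx0 (by omega)]
    congr 2
    omega
  · -- the top index `2n + j - 1 - 2r` is truncated, and the factor `i = 2r - (n + j + 1)` vanishes
    rw [qBinom_of_lt (by omega), zero_mul]
    refine (qPochhammer_eq_zero (i := 2 * r - (n + j + 1)) (by omega) ?_).symm
    rw [mul_right_comm, ← pow_add, show n + j + 1 + (2 * r - (n + j + 1)) = 2 * r by omega,
      mul_inv_cancel₀ (pow_ne_zero _ hx0)]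

theorem pow_sq_choose_two (x : RatFunc ℚ) (r : ℕ) : (x ^ 2) ^ r.choose 2 = x ^ (r ^ 2 - r) := by
  rw [← pow_mul, Nat.choose_two_right, Nat.mul_div_cancel' r.even_mul_pred_self.two_dvd,
    Nat.mul_sub_one, sq]

theorem sum_range_koshy_eq_zero (hx : ¬IsOfFinOrder x) (hx0 : x ≠ 0) {n j : ℕ} (hn : 1 ≤ n)
    (hj : 1 ≤ j) :
    ∑ r ∈ range (n + 1), (-1) ^ r *
      (x ^ (r ^ 2 - r) * qBinom (x ^ 2) n r * qBinom x (2 * n + j - 1 - 2 * r) (n - 1)) = 0 := by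
  have hx2 : ¬IsOfFinOrder (x ^ 2) := by simpa [isOfFinOrder_pow] using hx
  have hdeg :=
    (natDegree_qPochhammer_le (x ^ (n + j + 1)) x (n - 1)).trans_lt (Nat.sub_lt hn one_pos)
  refine (mul_eq_zero.1 ?_).resolve_right (qPochhammer_self_ne_zero hx (n - 1))
  rw [sum_mul, ← sum_qBinom_mul_eval_eq_zero hx2 (pow_ne_zero 2 hx0) hdeg]
  refine sum_congr rfl fun r hr => ?_
  rw [← qBinom_mul_qPochhammer_eq_eval hx hx0 hn hj (Nat.lt_succ_iff.1 (mem_range.1 hr)),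
    pow_sq_choose_two]
  ring

theorem qBinom_eq_sum_Icc (hx : ¬IsOfFinOrder x) (hx0 : x ≠ 0) {n j : ℕ} (hn : 1 ≤ n)
    (hj : 1 ≤ j) :
    qBinom x (2 * n + j - 1) (n - 1) = ∑ r ∈ Icc 1 n, (-1) ^ (r - 1) *
      (x ^ (r ^ 2 - r) * qBinom (x ^ 2) n r * qBinom x (2 * n + j - 1 - 2 * r) (n - 1)) := by
  have hsum := sum_range_koshy_eq_zero hx hx0 hn hj
  rw [range_eq_Ico, sum_eq_sum_Ico_succ_bot (by omega : 0 < n + 1), zero_add,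
    Ico_add_one_right_eq_Icc, qBinom_zero_right (by simpa [isOfFinOrder_pow] using hx)] at hsum
  simp only [zero_pow two_ne_zero, pow_zero, Nat.sub_zero, mul_zero, one_mul, mul_one] at hsum
  rw [← neg_eq_of_add_eq_zero_left hsum, ← sum_neg_distrib]
  refine sum_congr rfl fun r hr => ?_
  obtain ⟨s, rfl⟩ := Nat.exists_eq_add_of_le' (mem_Icc.1 hr).1
  rw [Nat.add_sub_cancel, pow_succ]
  ring

theorem qBallot_eq (hx : ¬IsOfFinOrder x) {n : ℕ} (hn : 1 ≤ n) (j : ℕ) :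
    qBallot x j n = qInt x j / qInt x n * qBinom x (2 * n + j - 1) (n - 1) := by
  have h := qBinom_succ_succ_mul hx (2 * n + j - 1) (n - 1)
  rw [Nat.sub_add_cancel (by omega), Nat.sub_add_cancel hn] at h
  have := qInt_ne_zero (pow_ne_one_of_not_isOfFinOrder hx (by omega : 0 < 2 * n + j))
  have := qInt_ne_zero (pow_ne_one_of_not_isOfFinOrder hx hn)
  rw [qBallot]
  field_simp
  linear_combination qInt x j * h

end Koshy

theorem not_isOfFinOrder_X : ¬IsOfFinOrder (RatFunc.X : RatFunc ℚ) := by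
  rw [isOfFinOrder_iff_pow_eq_one]
  rintro ⟨i, hi, h⟩
  rw [← RatFunc.algebraMap_X, ← map_pow, ← map_one (algebraMap ℚ[X] (RatFunc ℚ))] at h
  have := congrArg natDegree (RatFunc.algebraMap_injective ℚ h)
  rw [natDegree_X_pow, natDegree_one] at this
  omega

end QBallot

open QBallot

/-- For all `n ≥ 1` and `j ≥ 1`, in `ℚ(q)`:
`B_j(n,q) = ∑_{r=1}^{n} (−1)^{r−1} T_r^{(j)}(n,q)` where
`T_r^{(j)}(n,q) = q^{r²−r}·[n choose r]_{q²}·[2n+j−1−2r choose n−1]_q·[j]_q/[n]_q`. -/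
theorem qBallot_q_koshy (n j : ℕ) (hn : 1 ≤ n) (hj : 1 ≤ j) :
    qBallot RatFunc.X j n =
      ∑ r ∈ Finset.Icc 1 n,
        (-1 : RatFunc ℚ) ^ (r - 1) *
          (RatFunc.X ^ (r ^ 2 - r) * qBinom (RatFunc.X ^ 2) n r *
            qBinom RatFunc.X (2 * n + j - 1 - 2 * r) (n - 1) *
            qInt RatFunc.X j / qInt RatFunc.X n) := by
  rw [qBallot_eq not_isOfFinOrder_X hn,
    qBinom_eq_sum_Icc not_isOfFinOrder_X RatFunc.X_ne_zero hn hj, mul_sum]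
  refine sum_congr rfl fun r _ => ?_
  ring
end

section
/- Let n, r, j be positive integers, and set d = gcd(n, r) and m = gcd(n, 2r−j) (interpreting gcd with |2r−j|, and gcd(n,0) = n). Then the product [2d]_q · [m]_q divides [2n]_q · [j]_q in the polynomial ring ℤ[q]. -/
open Polynomial

lemma qIntP_zero : qIntP 0 = 0 := by
  simp [qIntP]

lemma qIntP_eq_prod_cyclotomic {a : ℕ} (ha : a ≠ 0) :
    qIntP a = ∏ k ∈ a.divisors.erase 1, cyclotomic k ℤ :=
  (prod_cyclotomic_eq_geom_sum (Nat.pos_of_ne_zero ha) ℤ).symm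

lemma qIntP_dvd_qIntP {a b : ℕ} (h : a ∣ b) : qIntP a ∣ qIntP b := by
  rcases eq_or_ne b 0 with rfl | hb
  · simp [qIntP_zero]
  rw [qIntP_eq_prod_cyclotomic (ne_zero_of_dvd_ne_zero hb h), qIntP_eq_prod_cyclotomic hb]
  exact Finset.prod_dvd_prod_of_subset _ _ _
    (Finset.erase_subset_erase _ (Nat.divisors_subset_of_dvd hb h))

lemma qIntP_mul_qIntP_dvd_qIntP_lcm_mul_qIntP_gcd (a b : ℕ) :
    qIntP a * qIntP b ∣ qIntP (Nat.lcm a b) * qIntP (Nat.gcd a b) := by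
  rcases eq_or_ne a 0 with rfl | ha
  · simp [qIntP_zero]
  rcases eq_or_ne b 0 with rfl | hb
  · simp [qIntP_zero]
  have hlcm : Nat.lcm a b ≠ 0 := Nat.lcm_ne_zero ha hb
  have hgcd : Nat.gcd a b ≠ 0 := Nat.gcd_ne_zero_left ha
  have h_union : a.divisors.erase 1 ∪ b.divisors.erase 1 ⊆ (Nat.lcm a b).divisors.erase 1 := by
    rw [← Finset.erase_union_distrib]
    refine Finset.erase_subset_erase _ (Finset.union_subset ?_ ?_)
    · exact Nat.divisors_subset_of_dvd hlcm (Nat.dvd_lcm_left a b)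
    · exact Nat.divisors_subset_of_dvd hlcm (Nat.dvd_lcm_right a b)
  have h_inter : a.divisors.erase 1 ∩ b.divisors.erase 1 ⊆ (Nat.gcd a b).divisors.erase 1 := by
    intro k hk
    simp only [Finset.mem_inter, Finset.mem_erase, Nat.mem_divisors] at hk ⊢
    exact ⟨hk.1.1, Nat.dvd_gcd hk.1.2.1 hk.2.2.1, hgcd⟩
  rw [qIntP_eq_prod_cyclotomic ha, qIntP_eq_prod_cyclotomic hb, qIntP_eq_prod_cyclotomic hlcm,
    qIntP_eq_prod_cyclotomic hgcd, ← Finset.prod_union_inter]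
  exact mul_dvd_mul (Finset.prod_dvd_prod_of_subset _ _ _ h_union)
    (Finset.prod_dvd_prod_of_subset _ _ _ h_inter)

theorem qIntP_gcd_dvd_general (n r j : ℕ) :
    qIntP (2 * Nat.gcd n r) * qIntP (Int.gcd (n : ℤ) (2 * (r : ℤ) - (j : ℤ))) ∣
      qIntP (2 * n) * qIntP j := by
  set d := Nat.gcd n r
  set m := Int.gcd (n : ℤ) (2 * (r : ℤ) - (j : ℤ))
  have h2d : 2 * d ∣ 2 * n := mul_dvd_mul_left 2 (Nat.gcd_dvd_left n r)
  have hm : m ∣ n := Int.natCast_dvd_natCast.1 (Int.gcd_dvd_left _ _)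
  have hgcd : Nat.gcd (2 * d) m ∣ j := by
    set k := Nat.gcd (2 * d) m
    have hk2r : (k : ℤ) ∣ 2 * r := by
      exact_mod_cast (Nat.gcd_dvd_left _ _).trans (mul_dvd_mul_left 2 (Nat.gcd_dvd_right n r))
    have hk_sub : (k : ℤ) ∣ 2 * r - j :=
      (Int.natCast_dvd_natCast.2 (Nat.gcd_dvd_right _ _)).trans (Int.gcd_dvd_right _ _)
    exact Int.natCast_dvd_natCast.1 (sub_sub_cancel (2 * (r : ℤ)) j ▸ dvd_sub hk2r hk_sub)
  calc _ ∣ qIntP (Nat.lcm (2 * d) m) * qIntP (Nat.gcd (2 * d) m) :=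
        qIntP_mul_qIntP_dvd_qIntP_lcm_mul_qIntP_gcd _ _
    _ ∣ _ := mul_dvd_mul (qIntP_dvd_qIntP (Nat.lcm_dvd h2d (hm.trans (dvd_mul_left n 2))))
        (qIntP_dvd_qIntP hgcd)

/-- Let `n, r, j` be positive integers, `d = gcd(n, r)` and `m = gcd(n, 2r−j)`
(the gcd being that of `n` and `|2r−j|`, with `gcd(n,0) = n`). Then
`[2d]_q·[m]_q` divides `[2n]_q·[j]_q` in `ℤ[q]`. -/
theorem qIntP_gcd_dvd (n r j : ℕ) (hn : 0 < n) (hr : 0 < r) (hj : 0 < j) :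
    qIntP (2 * Nat.gcd n r) * qIntP (Int.gcd (n : ℤ) (2 * (r : ℤ) - (j : ℤ))) ∣
      qIntP (2 * n) * qIntP j :=
  qIntP_gcd_dvd_general n r j
end
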